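/- Let G be a finite simple graph with distinct vertices u₁, …, u_k, and let H be the graph obtained from G by, for each i, adding three new vertices vᵢ, aᵢ, bᵢ together with the edges {uᵢ,vᵢ}, {vᵢ,aᵢ}, {vᵢ,bᵢ}, {aᵢ,bᵢ} (fusing a small LR gadget to each uᵢ). Then γ(H) = k + m, where m is the minimum size of a set S of vertices of G such that every vertex of G outside {u₁,…,u_k} is in S or adjacent to a vertex of S. In particular, if H has a dominating set of size s, then G has a set of size s − k that dominates every vertex except maybe some of the uᵢ. -/

import Mathlib

def DomSet {V : Type*} (G : SimpleGraph V) (S : Finset V) : Prop :=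
  ∀ v : V, v ∈ S ∨ ∃ w ∈ S, G.Adj w v

noncomputable def gamma {V : Type*} [Fintype V] (G : SimpleGraph V) : ℕ :=
  sInf {n | ∃ S : Finset V, DomSet G S ∧ S.card = n}

def fuseLRs {V : Type*} (G : SimpleGraph V) (k : ℕ) (u : Fin k → V) :
    SimpleGraph (V ⊕ Fin k × Fin 3) :=
  SimpleGraph.fromRel fun x y =>
    match x, y with
    | Sum.inl a, Sum.inl b => G.Adj a b
    | Sum.inl a, Sum.inr p => a = u p.1 ∧ p.2 = 0
    | Sum.inr p, Sum.inr q => p.1 = q.1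
    | _, _ => False

lemma adj_ll {V : Type*} (G : SimpleGraph V) (k : ℕ) (u : Fin k → V) (a b : V) :
    (fuseLRs G k u).Adj (Sum.inl a) (Sum.inl b) ↔ G.Adj a b := by
  simp only [fuseLRs, SimpleGraph.fromRel_adj, ne_eq, Sum.inl.injEq]
  constructor
  · rintro ⟨h, h1 | h1⟩ <;> [exact h1; exact h1.symm]
  · intro h; exact ⟨G.ne_of_adj h, Or.inl h⟩

lemma adj_lr {V : Type*} (G : SimpleGraph V) (k : ℕ) (u : Fin k → V) (a : V) (p : Fin k × Fin 3) :
    (fuseLRs G k u).Adj (Sum.inl a) (Sum.inr p) ↔ a = u p.1 ∧ p.2 = 0 := by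
  simp [fuseLRs, SimpleGraph.fromRel_adj]

lemma adj_rr {V : Type*} (G : SimpleGraph V) (k : ℕ) (u : Fin k → V) (p q : Fin k × Fin 3) :
    (fuseLRs G k u).Adj (Sum.inr p) (Sum.inr q) ↔ p ≠ q ∧ p.1 = q.1 := by
  constructor
  · rintro ⟨h, h1 | h1⟩ <;> exact ⟨fun e => h (by rw [e]), by simpa using (by first | exact h1 | exact h1.symm)⟩
  · rintro ⟨h, h1⟩; exact ⟨by simpa using h, Or.inl h1⟩

lemma extract {V : Type*} [Fintype V] (G : SimpleGraph V) (k : ℕ) (u : Fin k → V)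
    (S : Finset (V ⊕ Fin k × Fin 3)) (hS : DomSet (fuseLRs G k u) S) :
    ∃ T : Finset V,
      (∀ v : V, (∀ i, v ≠ u i) → (v ∈ T ∨ ∃ w ∈ T, G.Adj w v)) ∧
      T.card + k ≤ S.card := by
  classical
  refine ⟨Finset.univ.filter (fun w => Sum.inl w ∈ S), ?_, ?_⟩
  · intro v hv
    rcases hS (Sum.inl v) with h | ⟨w, hw, hadj⟩
    · exact Or.inl (by simpa using h)
    · match w with
      | Sum.inl a =>
        exact Or.inr ⟨a, by simpa using hw, by rwa [adj_ll] at hadj⟩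
      | Sum.inr p =>
        rw [(fuseLRs G k u).adj_comm, adj_lr] at hadj
        exact absurd hadj.1 (hv p.1)
  · -- counting
    have hgadg : ∀ i : Fin k, ∃ j : Fin 3, Sum.inr (i, j) ∈ S := by
      intro i
      rcases hS (Sum.inr (i, 1)) with h | ⟨w, hw, hadj⟩
      · exact ⟨1, h⟩
      · match w with
        | Sum.inl a =>
          rw [adj_lr] at hadj
          exact absurd hadj.2 (by norm_num)
        | Sum.inr q =>
          rw [adj_rr] at hadj
          obtain ⟨q1, q2⟩ := q
          simp only [Prod.fst] at hadj
          rw [hadj.2] at hw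
          exact ⟨q2, hw⟩
    choose j hj using hgadg
    have hL : (Finset.univ.filter (fun w => Sum.inl w ∈ S)).card
        = (S.filter (fun x => x.isLeft)).card := by
      apply Finset.card_bij (fun w _ => Sum.inl w)
      · intro w hw; simp at hw ⊢; exact hw
      · intro a _ b _ h; exact Sum.inl.inj h
      · intro x hx
        simp only [Finset.mem_filter] at hx
        match x, hx with
        | Sum.inl a, hx => exact ⟨a, by simp [hx.1], rfl⟩
    have hR : k ≤ (S.filter (fun x => x.isRight)).card := by
      have : ((Finset.univ : Finset (Fin k)).image (fun i => (Sum.inr (i, j i) : V ⊕ Fin k × Fin 3))).card = k := by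
        rw [Finset.card_image_of_injective _ (fun a b h => by
          have := Sum.inr.inj h; exact congrArg Prod.fst this)]
        simp
      calc k = _ := this.symm
        _ ≤ _ := Finset.card_le_card (by
            intro x hx
            simp only [Finset.mem_image, Finset.mem_univ, true_and] at hx
            obtain ⟨i, rfl⟩ := hx
            simp [Finset.mem_filter, hj i])
    have heq : S.filter (fun x => ¬ (Sum.isLeft x = true)) = S.filter (fun x => x.isRight) := by
      apply Finset.filter_congr; intro x _; simp [Sum.not_isLeft]
    have hsplit := Finset.card_filter_add_card_filter_not (s := S)
      (p := fun x => Sum.isLeft x = true)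
    rw [heq] at hsplit
    omega

/-- Lemma 11 (Covering with LRs): if `H` is obtained from `G` by fusing a small LR
gadget to each of the distinct vertices `u 0, …, u (k-1)`, then `γ(H) = k + m`, where
`m` is the minimum size of a set of vertices of `G` dominating every vertex outside
`{u 0, …, u (k-1)}`. In particular, from a dominating set of `H` of size `s` one gets
a set of size at most `s − k` in `G` dominating every vertex except maybe the `u i`. -/
theorem stmt10 {V : Type*} [Fintype V] (G : SimpleGraph V) (k : ℕ) (u : Fin k → V)
    (hinj : Function.Injective u) :
    gamma (fuseLRs G k u) =
      k + sInf {n | ∃ S : Finset V,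
        (∀ v : V, (∀ i, v ≠ u i) → (v ∈ S ∨ ∃ w ∈ S, G.Adj w v)) ∧ S.card = n} ∧
    ∀ S : Finset (V ⊕ Fin k × Fin 3), DomSet (fuseLRs G k u) S →
      ∃ T : Finset V,
        (∀ v : V, (∀ i, v ≠ u i) → (v ∈ T ∨ ∃ w ∈ T, G.Adj w v)) ∧
        T.card ≤ S.card - k := by
  classical
  constructor
  · set M := {n | ∃ S : Finset V,
        (∀ v : V, (∀ i, v ≠ u i) → (v ∈ S ∨ ∃ w ∈ S, G.Adj w v)) ∧ S.card = n} with hM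
    have hMne : M.Nonempty := ⟨Fintype.card V, Finset.univ, fun v _ => Or.inl (Finset.mem_univ v),
      Finset.card_univ⟩
    have hGne : {n | ∃ S : Finset (V ⊕ Fin k × Fin 3),
        DomSet (fuseLRs G k u) S ∧ S.card = n}.Nonempty :=
      ⟨_, Finset.univ, fun v => Or.inl (Finset.mem_univ v), rfl⟩
    apply le_antisymm
    · -- γ ≤ k + m
      obtain ⟨S, hS, hScard⟩ := Nat.sInf_mem hMne
      set S' : Finset (V ⊕ Fin k × Fin 3) :=
        S.image Sum.inl ∪ (Finset.univ : Finset (Fin k)).image (fun i => Sum.inr (i, 0)) with hS'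
      have hdom : DomSet (fuseLRs G k u) S' := by
        intro x
        match x with
        | Sum.inl v =>
          by_cases h : ∃ i, v = u i
          · obtain ⟨i, rfl⟩ := h
            refine Or.inr ⟨Sum.inr (i, 0), ?_, ?_⟩
            · exact Finset.mem_union_right _ (Finset.mem_image_of_mem _ (Finset.mem_univ i))
            · rw [(fuseLRs G k u).adj_comm, adj_lr]; exact ⟨rfl, rfl⟩
          · push_neg at h
            rcases hS v h with hv | ⟨w, hw, hadj⟩
            · exact Or.inl (Finset.mem_union_left _ (Finset.mem_image_of_mem _ hv))
            · exact Or.inr ⟨Sum.inl w, Finset.mem_union_left _ (Finset.mem_image_of_mem _ hw),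
                (adj_ll G k u w v).mpr hadj⟩
        | Sum.inr p =>
          by_cases h : p.2 = 0
          · refine Or.inl (Finset.mem_union_right _ ?_)
            have : p = (p.1, 0) := Prod.ext rfl h
            rw [this]
            exact Finset.mem_image_of_mem _ (Finset.mem_univ p.1)
          · refine Or.inr ⟨Sum.inr (p.1, 0), Finset.mem_union_right _
              (Finset.mem_image_of_mem _ (Finset.mem_univ p.1)), ?_⟩
            rw [adj_rr]
            exact ⟨fun e => h (by rw [← e]), rfl⟩
      have hcard : S'.card = k + sInf M := by
        rw [hS', Finset.card_union_of_disjoint, Finset.card_image_of_injective _ Sum.inl_injective,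
          Finset.card_image_of_injective, hScard, Finset.card_univ, Fintype.card_fin, Nat.add_comm]
        · intro a b hab
          exact (Prod.mk.injEq _ _ _ _).mp (Sum.inr.inj hab) |>.1
        · rw [Finset.disjoint_left]
          rintro x hx hy
          simp only [Finset.mem_image] at hx hy
          obtain ⟨a, _, rfl⟩ := hx
          obtain ⟨i, _, h⟩ := hy
          cases h
      exact Nat.sInf_le ⟨S', hdom, hcard⟩
    · -- k + m ≤ γ
      obtain ⟨S, hS, hScard⟩ := Nat.sInf_mem hGne
      obtain ⟨T, hT, hTc⟩ := extract G k u S hS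
      have hm : sInf M ≤ T.card := Nat.sInf_le ⟨T, hT, rfl⟩
      unfold gamma
      omega
  · intro S hS
    obtain ⟨T, hT, hc⟩ := extract G k u S hS
    exact ⟨T, hT, by omega⟩
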